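/- arXiv:2009.02200 — 4 statements merged into one kernel-verified Lean document; each statement's English description precedes it below -/
import Mathlib

section
/- The sharpened signal D(x) = L(x) − L''(x) is nonnegative for all real x if and only if w² ≥ 9/8 (equivalently, w ≥ 3/(2√2)). -/
/-- The sharpened signal `D(x) = L(x) − L''(x)` is nonnegative for all
real `x` if and only if `w² ≥ 9/8`. -/
theorem sharpened_signal_nonneg_iff (w h : ℝ) (hw : 0 < w) (hh : 0 < h) :
    (∀ x : ℝ,
        0 ≤ w ^ 2 * h / (x ^ 2 + w ^ 2)
              - 2 * w ^ 2 * h * (3 * x ^ 2 - w ^ 2) / (x ^ 2 + w ^ 2) ^ 3)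
      ↔ w ^ 2 ≥ 9 / 8 := by
  have hden : ∀ x : ℝ, (0:ℝ) < x ^ 2 + w ^ 2 := fun x => by positivity
  have key : ∀ x : ℝ,
      w ^ 2 * h / (x ^ 2 + w ^ 2)
        - 2 * w ^ 2 * h * (3 * x ^ 2 - w ^ 2) / (x ^ 2 + w ^ 2) ^ 3
      = w ^ 2 * h * ((x ^ 2 + w ^ 2 - 3) ^ 2 + (8 * w ^ 2 - 9))
          / (x ^ 2 + w ^ 2) ^ 3 := by
    intro x
    have h0 := (hden x).ne'
    field_simp
    ring
  constructor
  · intro H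
    by_contra hlt
    push_neg at hlt
    have hlt' : w ^ 2 < 9 / 8 := hlt
    set x := Real.sqrt (3 - w ^ 2) with hxdef
    have hx2 : x ^ 2 = 3 - w ^ 2 := Real.sq_sqrt (by nlinarith)
    have hD := H x
    rw [key x, hx2] at hD
    have hdpos : (0:ℝ) < (3 - w ^ 2 + w ^ 2) ^ 3 := by norm_num
    have hnum : 0 ≤ w ^ 2 * h * ((3 - w ^ 2 + w ^ 2 - 3) ^ 2 + (8 * w ^ 2 - 9)) := by
      have := (div_nonneg_iff).mp hD
      rcases this with ⟨h1, _⟩ | ⟨_, h2⟩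
      · exact h1
      · linarith
    nlinarith [sq_nonneg w, mul_pos (mul_pos (pow_pos hw 2) hh) (show (0:ℝ) < 9 - 8 * w^2 by linarith)]
  · intro hge x
    rw [key x]
    have hnum : 0 ≤ (x ^ 2 + w ^ 2 - 3) ^ 2 + (8 * w ^ 2 - 9) := by
      nlinarith [sq_nonneg (x ^ 2 + w ^ 2 - 3)]
    have := hden x
    positivity
end

section
/- For k > 0, the weighted sharpened signal D_k(x) = L(x) − kL''(x) is nonnegative for all real x if and only if k ≤ (8/9)w². -/
/-!
Put `s = x² + w²`. Over the common denominator `s³`, the numerator of `D_k(x)` is `w²h` times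
`s² - 6ks + 8kw² = (s - 3k)² + k(8w² - 9k)`. For `k ≤ 8w²/9` both terms are nonnegative.
Conversely, if `3k ≤ w²` then already `k ≤ 8w²/9`; otherwise `x = √(3k - w²)` makes `s = 3k`,
leaving `0 ≤ k(8w² - 9k)`.
-/

theorem sharpened_signal_eq (w h k x : ℝ) (hs : x ^ 2 + w ^ 2 ≠ 0) :
    w ^ 2 * h / (x ^ 2 + w ^ 2) - k * (2 * w ^ 2 * h * (3 * x ^ 2 - w ^ 2) / (x ^ 2 + w ^ 2) ^ 3)
      = w ^ 2 * h * ((x ^ 2 + w ^ 2 - 3 * k) ^ 2 + k * (8 * w ^ 2 - 9 * k))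
          / (x ^ 2 + w ^ 2) ^ 3 := by
  field_simp
  ring

theorem sharpened_signal_nonneg_iff_numerator_nonneg {w h : ℝ} (k x : ℝ) (hw : w ≠ 0) (hh : 0 < h) :
    0 ≤ w ^ 2 * h / (x ^ 2 + w ^ 2)
        - k * (2 * w ^ 2 * h * (3 * x ^ 2 - w ^ 2) / (x ^ 2 + w ^ 2) ^ 3)
      ↔ 0 ≤ (x ^ 2 + w ^ 2 - 3 * k) ^ 2 + k * (8 * w ^ 2 - 9 * k) := by
  have hs : 0 < x ^ 2 + w ^ 2 := by positivity
  have hwh : 0 < w ^ 2 * h := by positivity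
  rw [sharpened_signal_eq w h k x hs.ne', mul_div_assoc, mul_nonneg_iff_of_pos_left hwh,
    le_div_iff₀ (by positivity), zero_mul]

theorem forall_sharpened_numerator_nonneg_iff {w k : ℝ} (hk : 0 < k) :
    (∀ x : ℝ, 0 ≤ (x ^ 2 + w ^ 2 - 3 * k) ^ 2 + k * (8 * w ^ 2 - 9 * k))
      ↔ k ≤ 8 / 9 * w ^ 2 := by
  constructor
  · intro H
    rcases le_or_gt (3 * k) (w ^ 2) with hsmall | hlarge
    · nlinarith [sq_nonneg w]
    · have hroot : Real.sqrt (3 * k - w ^ 2) ^ 2 + w ^ 2 - 3 * k = 0 := by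
        rw [Real.sq_sqrt (by linarith)]
        ring
      have hmin := H (Real.sqrt (3 * k - w ^ 2))
      rw [hroot] at hmin
      nlinarith
  · intro hk9 x
    have : 0 ≤ k * (8 * w ^ 2 - 9 * k) := mul_nonneg hk.le (by linarith)
    positivity

/-- For `k > 0`, the weighted sharpened signal `D_k(x) = L(x) − kL''(x)`
is nonnegative for all real `x` if and only if `k ≤ (8/9)w²`. -/
theorem weighted_sharpened_signal_nonneg_iff (w h k : ℝ) (hw : 0 < w) (hh : 0 < h)
    (hk : 0 < k) :
    (∀ x : ℝ,
        0 ≤ w ^ 2 * h / (x ^ 2 + w ^ 2)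
              - k * (2 * w ^ 2 * h * (3 * x ^ 2 - w ^ 2) / (x ^ 2 + w ^ 2) ^ 3))
      ↔ k ≤ 8 / 9 * w ^ 2 := by
  simp only [sharpened_signal_nonneg_iff_numerator_nonneg k _ hw.ne' hh]
  exact forall_sharpened_numerator_nonneg_iff hk
end

section
/- At the optimal weight k = (8/9)w², the weighted sharpened signal D_k(x) = L(x) − kL''(x) vanishes at x = √(3k − w²) = √(5/3)·w and at x = −√(5/3)·w; that is, the nonnegativity bound k ≤ (8/9)w² is sharp in the sense that D_{(8/9)w²} has zeros. -/
/-- At the optimal weight `k = (8/9)w²`, the weighted sharpened signal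
`D_k(x) = L(x) − kL''(x)` vanishes at `x = √(3k − w²) = √(5/3)·w` and at
`x = −√(5/3)·w`; the nonnegativity bound `k ≤ (8/9)w²` is sharp. -/
theorem weighted_sharpened_signal_zeros_at_optimal_weight (w h : ℝ)
    (hw : 0 < w) (hh : 0 < h) :
    (Real.sqrt (3 * (8 / 9 * w ^ 2) - w ^ 2) = Real.sqrt (5 / 3) * w) ∧
    (w ^ 2 * h / ((Real.sqrt (5 / 3) * w) ^ 2 + w ^ 2)
        - (8 / 9 * w ^ 2)
            * (2 * w ^ 2 * h * (3 * (Real.sqrt (5 / 3) * w) ^ 2 - w ^ 2)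
                / ((Real.sqrt (5 / 3) * w) ^ 2 + w ^ 2) ^ 3) = 0) ∧
    (w ^ 2 * h / ((-(Real.sqrt (5 / 3) * w)) ^ 2 + w ^ 2)
        - (8 / 9 * w ^ 2)
            * (2 * w ^ 2 * h * (3 * (-(Real.sqrt (5 / 3) * w)) ^ 2 - w ^ 2)
                / ((-(Real.sqrt (5 / 3) * w)) ^ 2 + w ^ 2) ^ 3) = 0) := by
  have hs : (Real.sqrt (5 / 3)) ^ 2 = 5 / 3 := Real.sq_sqrt (by norm_num)
  have hden : (5 / 3 : ℝ) * w ^ 2 + w ^ 2 ≠ 0 := by positivity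
  refine ⟨?_, ?_, ?_⟩
  · rw [show 3 * (8 / 9 * w ^ 2) - w ^ 2 = (5/3) * w ^ 2 by ring,
      Real.sqrt_mul (by norm_num), Real.sqrt_sq hw.le]
  · rw [mul_pow, hs]; field_simp; ring
  · rw [neg_pow, mul_pow, hs]; field_simp; ring
end

section
/- Let X = A·S where A is an m×n matrix and S an n×p matrix, both with nonnegative real entries, and suppose S satisfies the NNA condition with witness indices j_1,…,j_n. Then every column of X is a nonnegative linear combination of the columns X^{j_1},…,X^{j_n}: for each j ∈ {1,…,p}, X^j = Σ_{i=1}^{n} (S_{i,j}/S_{i,j_i})·X^{j_i}, and each coefficient S_{i,j}/S_{i,j_i} is nonnegative. -/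
/-- If `X = A·S` with `A`, `S` entrywise nonnegative and `S` satisfying
the NNA condition with witness columns `j i`, then every column of `X` is a
nonnegative linear combination of the columns `X^{j 1}, …, X^{j n}`:
`X^c = Σ_i (S i c / S i (j i)) · X^{j i}` with nonnegative coefficients. -/
theorem nna_columns_span (m n p : ℕ)
    (A : Matrix (Fin m) (Fin n) ℝ) (S : Matrix (Fin n) (Fin p) ℝ)
    (hA : ∀ i j, 0 ≤ A i j) (hS : ∀ i j, 0 ≤ S i j)
    (X : Matrix (Fin m) (Fin p) ℝ) (hX : X = A * S)
    (j : Fin n → Fin p)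
    (hNNA : ∀ i : Fin n, 0 < S i (j i) ∧ ∀ k : Fin n, k ≠ i → S k (j i) = 0) :
    (∀ c : Fin p, ∀ r : Fin m,
      X r c = ∑ i : Fin n, (S i c / S i (j i)) * X r (j i)) ∧
    (∀ i : Fin n, ∀ c : Fin p, 0 ≤ S i c / S i (j i)) := by
  subst hX
  constructor
  · intro c r
    have hcol : ∀ i : Fin n, (A * S) r (j i) = A r i * S i (j i) := by
      intro i
      rw [Matrix.mul_apply]
      refine Finset.sum_eq_single i (fun k _ hk => ?_) (by simp)
      rw [(hNNA i).2 k hk, mul_zero]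
    rw [Matrix.mul_apply]
    refine Finset.sum_congr rfl fun i _ => ?_
    rw [hcol i, div_mul_eq_mul_div, mul_comm (A r i) (S i (j i)),
      mul_div_assoc, mul_div_cancel_left₀ _ (ne_of_gt (hNNA i).1), mul_comm]
  · intro i c
    exact div_nonneg (hS i c) (le_of_lt (hNNA i).1)
end
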